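/- With φ'(τ) = √(1-r²) and φ''-type relation φ̈ = -r² (where dots denote d/dτ and r = r(τ) satisfies dr/dτ = r√(1-r²)), the second fundamental forms of a graph M (hyperbolic) and its Beltrami image M̃ (Euclidean) satisfy h̃_{ij} ṽ = (1-r²) h_{ij} v, where v² = 1 + σ^{ij}u_i u_j and ṽ² = 1 + σ^{ij}ũ_i ũ_j with ũ_i = √(1-r²) u_i. In particular, h_{ij} is positive definite if and only if h̃_{ij} is positive definite. -/

import Mathlib

/-! Writing `s = √(1 - r²)`, clearing denominators in the two formulas shows that both
`h̃ᵢⱼ ṽ` and `s² hᵢⱼ v` equal `r (-s uᵢⱼ + uᵢuⱼ + σᵢⱼ)`: in the Euclidean formula the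
term `φ'' uᵢuⱼ = -r² uᵢuⱼ` combines with `s² uᵢuⱼ` to `uᵢuⱼ`. Hence `h̃ = c • h` with
`c = (1 - r²) v / ṽ > 0`, and positive definiteness is invariant under positive scaling. -/

theorem Matrix.posDef_smul_iff {n K : Type*} [Field K] [LinearOrder K] [IsOrderedRing K]
    [StarRing K] [StarOrderedRing K] {M : Matrix n n K} {c : K} (hc : 0 < c) :
    (c • M).PosDef ↔ M.PosDef := by
  refine ⟨fun h => ?_, fun h => h.smul hc⟩
  simpa [smul_smul, inv_mul_cancel₀ hc.ne'] using h.smul (inv_pos.mpr hc)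

theorem beltrami_entry_relation {r s v vt w p q g x y : ℝ}
    (hr : r ≠ 0) (hs : s ≠ 0) (hv : v ≠ 0) (hvt : vt ≠ 0) (hs2 : s ^ 2 = 1 - r ^ 2)
    (hx : x * (s / r) = -w * v⁻¹ + (1 / s) * v⁻¹ * (p * q + g))
    (hy : y * r⁻¹ = -(s * w + (-(r ^ 2)) * (p * q)) * vt⁻¹
      + 1 * vt⁻¹ * ((s * p) * (s * q) + g)) :
    y * vt = (1 - r ^ 2) * x * v := by
  field_simp at hx hy
  linear_combination hy - hx + (x * v + r * (p * q)) * hs2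

theorem beltrami_second_fundamental_form_general (n : ℕ) (r v vt : ℝ)
    (hr : 0 < r) (hr1 : r < 1) (hv : 0 < v) (hvt : 0 < vt)
    (σm uij : Matrix (Fin n) (Fin n) ℝ) (du : Fin n → ℝ)
    (h ht : Matrix (Fin n) (Fin n) ℝ)
    (hdef : ∀ i j, h i j * (Real.sqrt (1 - r ^ 2) / r)
      = -(uij i j) * v⁻¹ + (1 / Real.sqrt (1 - r ^ 2)) * v⁻¹ * (du i * du j + σm i j))
    (htdef : ∀ i j, ht i j * r⁻¹
      = -(Real.sqrt (1 - r ^ 2) * uij i j + (-(r ^ 2)) * (du i * du j)) * vt⁻¹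
        + 1 * vt⁻¹ * ((Real.sqrt (1 - r ^ 2) * du i) * (Real.sqrt (1 - r ^ 2) * du j)
          + σm i j)) :
    (∀ i j, ht i j * vt = (1 - r ^ 2) * h i j * v) ∧
    (h.PosDef ↔ ht.PosDef) := by
  have hr2 : 0 < 1 - r ^ 2 := by nlinarith
  have hs : Real.sqrt (1 - r ^ 2) ≠ 0 := (Real.sqrt_pos.mpr hr2).ne'
  have entry (i j : Fin n) : ht i j * vt = (1 - r ^ 2) * h i j * v :=
    beltrami_entry_relation hr.ne' hs hv.ne' hvt.ne' (Real.sq_sqrt hr2.le) (hdef i j) (htdef i j)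
  have hscale : ht = ((1 - r ^ 2) * v / vt) • h := by
    ext i j
    rw [Matrix.smul_apply, smul_eq_mul, eq_comm, div_mul_eq_mul_div, div_eq_iff hvt.ne', entry]
    ring
  refine ⟨entry, ?_⟩
  rw [hscale, Matrix.posDef_smul_iff (by positivity)]

theorem beltrami_second_fundamental_form (n : ℕ) (r v vt : ℝ)
    (hr : 0 < r) (hr1 : r < 1) (hv : 0 < v) (hvt : 0 < vt)
    (σm σInv uij : Matrix (Fin n) (Fin n) ℝ) (du : Fin n → ℝ)
    (hσ : σm * σInv = 1)
    (hvdef : v ^ 2 = 1 + ∑ i, ∑ j, σInv i j * du i * du j)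
    (hvtdef : vt ^ 2 = 1 + ∑ i, ∑ j,
      σInv i j * (Real.sqrt (1 - r ^ 2) * du i) * (Real.sqrt (1 - r ^ 2) * du j))
    (h ht : Matrix (Fin n) (Fin n) ℝ)
    (hdef : ∀ i j, h i j * (Real.sqrt (1 - r ^ 2) / r)
      = -(uij i j) * v⁻¹ + (1 / Real.sqrt (1 - r ^ 2)) * v⁻¹ * (du i * du j + σm i j))
    (htdef : ∀ i j, ht i j * r⁻¹
      = -(Real.sqrt (1 - r ^ 2) * uij i j + (-(r ^ 2)) * (du i * du j)) * vt⁻¹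
        + 1 * vt⁻¹ * ((Real.sqrt (1 - r ^ 2) * du i) * (Real.sqrt (1 - r ^ 2) * du j)
          + σm i j)) :
    (∀ i j, ht i j * vt = (1 - r ^ 2) * h i j * v) ∧
    (h.PosDef ↔ ht.PosDef) :=
  beltrami_second_fundamental_form_general n r v vt hr hr1 hv hvt σm uij du h ht hdef htdef
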